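/- Let σ be a term ordering, F a finite set of nonzero polynomials in Q[x_1,...,x_n], and p a prime. If p is σ-Pauer-lucky for prim(F), then p is σ-good for the ideal ⟨F⟩. -/

import Mathlib

open MvPolynomial
open scoped Classical

namespace GB

variable {n : ℕ}

/-- The σ-leading exponent (leading term, as a power-product) of a polynomial;
`0` for the zero polynomial. -/
noncomputable def lexp {K : Type*} [CommSemiring K] (m : MonomialOrder (Fin n))
    (f : MvPolynomial (Fin n) K) : Fin n →₀ ℕ :=
  m.toSyn.symm (f.support.sup fun d => m.toSyn d)

/-- The σ-leading coefficient. -/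
noncomputable def lcoeff {K : Type*} [CommSemiring K] (m : MonomialOrder (Fin n))
    (f : MvPolynomial (Fin n) K) : K :=
  MvPolynomial.coeff (lexp m f) f

/-- The σ-leading monomial (leading coefficient times leading power-product). -/
noncomputable def LM {K : Type*} [CommSemiring K] (m : MonomialOrder (Fin n))
    (f : MvPolynomial (Fin n) K) : MvPolynomial (Fin n) K :=
  monomial (lexp m f) (lcoeff m f)

/-- The leading term ideal `LT_σ(I)` of an ideal, over a field. -/
noncomputable def LTIdeal {K : Type*} [Field K] (m : MonomialOrder (Fin n))
    (I : Ideal (MvPolynomial (Fin n) K)) : Ideal (MvPolynomial (Fin n) K) :=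
  Ideal.span {t | ∃ f ∈ I, f ≠ 0 ∧ t = monomial (lexp m f) (1 : K)}

/-- `G` is a σ-Gröbner basis of `I` (over a field). -/
def IsGB {K : Type*} [Field K] (m : MonomialOrder (Fin n))
    (G : Finset (MvPolynomial (Fin n) K)) (I : Ideal (MvPolynomial (Fin n) K)) : Prop :=
  (0 : MvPolynomial (Fin n) K) ∉ G ∧ (G : Set (MvPolynomial (Fin n) K)) ⊆ I ∧
    Ideal.span (G : Set (MvPolynomial (Fin n) K)) = I ∧
    ∀ f ∈ I, f ≠ 0 → ∃ g ∈ G, lexp m g ≤ lexp m f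

/-- `G` is the reduced σ-Gröbner basis of `I`. -/
def IsReducedGB {K : Type*} [Field K] (m : MonomialOrder (Fin n))
    (G : Finset (MvPolynomial (Fin n) K)) (I : Ideal (MvPolynomial (Fin n) K)) : Prop :=
  IsGB m G I ∧ (∀ g ∈ G, lcoeff m g = 1) ∧
    ∀ g ∈ G, ∀ d ∈ g.support, ∀ g' ∈ G, g' ≠ g → ¬ lexp m g' ≤ d

/-- `G` is a strong σ-Gröbner basis of the ideal `J ⊆ ℤ[x]` it generates. -/
def IsStrongGB (m : MonomialOrder (Fin n)) (G : Finset (MvPolynomial (Fin n) ℤ))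
    (J : Ideal (MvPolynomial (Fin n) ℤ)) : Prop :=
  (0 : MvPolynomial (Fin n) ℤ) ∉ G ∧ Ideal.span (G : Set (MvPolynomial (Fin n) ℤ)) = J ∧
    ∀ f ∈ J, f ≠ 0 → ∃ g ∈ G, LM m g ∣ LM m f

/-- `G` is a minimal strong σ-Gröbner basis of `J`. -/
def IsMinStrongGB (m : MonomialOrder (Fin n)) (G : Finset (MvPolynomial (Fin n) ℤ))
    (J : Ideal (MvPolynomial (Fin n) ℤ)) : Prop :=
  IsStrongGB m G J ∧ ∀ g ∈ G, ∀ g' ∈ G, g ≠ g' → ¬ LM m g ∣ LM m g'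

/-- The denominator of a polynomial with rational coefficients. -/
def den (f : MvPolynomial (Fin n) ℚ) : ℕ :=
  f.support.lcm fun d => (MvPolynomial.coeff d f).den

/-- The denominator of a finite set of polynomials. -/
noncomputable def denF (G : Finset (MvPolynomial (Fin n) ℚ)) : ℕ :=
  G.lcm den

/-- `f` scaled by `den f`, as an integer polynomial. -/
noncomputable def intScale (f : MvPolynomial (Fin n) ℚ) : MvPolynomial (Fin n) ℤ :=
  f.support.sum fun d => monomial d (MvPolynomial.coeff d f * (den f : ℚ)).num

/-- The primitive integral part of a polynomial with rational coefficients. -/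
noncomputable def primQ (f : MvPolynomial (Fin n) ℚ) : MvPolynomial (Fin n) ℤ :=
  (intScale f).support.sum fun d =>
    monomial d (MvPolynomial.coeff d (intScale f) /
      ((intScale f).support.gcd fun e => MvPolynomial.coeff e (intScale f)))

/-- Reduction of a rational number modulo `p` (meaningful when `p ∤ a.den`). -/
noncomputable def redQ (p : ℕ) (a : ℚ) : ZMod p :=
  (a.num : ZMod p) * (a.den : ZMod p)⁻¹

/-- Coefficientwise reduction modulo `p` of a polynomial with rational coefficients
(meaningful when `p` divides no coefficient denominator). -/
noncomputable def piP (p : ℕ) (f : MvPolynomial (Fin n) ℚ) :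
    MvPolynomial (Fin n) (ZMod p) :=
  f.support.sum fun d => monomial d (redQ p (MvPolynomial.coeff d f))

/-- A σ-ordered tuple of (necessarily distinct) power-products. -/
def SOrd (m : MonomialOrder (Fin n)) (L : List (Fin n →₀ ℕ)) : Prop :=
  L.Pairwise fun a b => m.toSyn a < m.toSyn b

/-- `T'` strictly σ-precedes `T`:  either `T` is a proper prefix of `T'`, or at the first
index where they differ (within both lengths) the entry of `T'` is σ-smaller. -/
def Prec (m : MonomialOrder (Fin n)) (T' T : List (Fin n →₀ ℕ)) : Prop :=
  (T <+: T' ∧ T ≠ T') ∨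
    ∃ k, k < T.length ∧ k < T'.length ∧ T.take k = T'.take k ∧
      m.toSyn (T'.getD k 0) < m.toSyn (T.getD k 0)

/-- `T'` σ-precedes or equals `T`. -/
def PrecEq (m : MonomialOrder (Fin n)) (T' T : List (Fin n →₀ ℕ)) : Prop :=
  Prec m T' T ∨ T' = T

/-- The minimal generating set of the monomial ideal `LT_σ(I)`: the set of leading
power-products of nonzero elements of `I` which are minimal w.r.t. divisibility. -/
def minGenSet {K : Type*} [Field K] (m : MonomialOrder (Fin n))
    (I : Ideal (MvPolynomial (Fin n) K)) : Set (Fin n →₀ ℕ) :=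
  {d | (∃ f ∈ I, f ≠ 0 ∧ lexp m f = d) ∧
    ∀ f ∈ I, f ≠ 0 → lexp m f ≤ d → lexp m f = d}

/-- `L` is the tuple `O_σ(I)`: the σ-ordered tuple of the minimal generating set
of `LT_σ(I)`. -/
def IsOsIdeal {K : Type*} [Field K] (m : MonomialOrder (Fin n))
    (I : Ideal (MvPolynomial (Fin n) K)) (L : List (Fin n →₀ ℕ)) : Prop :=
  SOrd m L ∧ ∀ d, d ∈ L ↔ d ∈ minGenSet m I

/-- `L` is the σ-ordered tuple of the interreduction of the set `S` of power-products. -/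
def IsOsSet (m : MonomialOrder (Fin n)) (S : Finset (Fin n →₀ ℕ))
    (L : List (Fin n →₀ ℕ)) : Prop :=
  SOrd m L ∧ ∀ d, d ∈ L ↔ (d ∈ S ∧ ∀ s ∈ S, s ≤ d → s = d)

end GB

/-! The reduced Gröbner basis `G` is monic, so `p ∣ den g` for some `g ∈ G` means that the
leading coefficient `den g` of the integral polynomial `w = den g • g` vanishes mod `p`, while
`w` itself does not. Some nonzero integer multiple of `w` lies in `J = ⟨prim F⟩ ⊆ ℤ[x]`, and
because no leading coefficient of the strong Gröbner basis of `J` is divisible by `p`,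
reducing by it (with S-polynomials, so that only units mod `p` are introduced) shows that the
leading power-product of `w mod p` is divisible by the leading power-product of an element of
`J`, hence of `G`. That power-product is a non-leading term of `g`, which contradicts
reducedness. -/

theorem Rat.intCast_num_mul_natCast {q : ℚ} {k : ℕ} (h : q.den ∣ k) :
    ((q * k).num : ℚ) = q * k := by
  obtain ⟨j, rfl⟩ := h
  have : q * ((q.den * j : ℕ) : ℚ) = ((q.num * j : ℤ) : ℚ) := by
    push_cast; rw [← mul_assoc, Rat.mul_den_eq_num]
  rw [this, Rat.num_intCast]

theorem Rat.den_dvd_of_mul_natCast_eq_intCast {q : ℚ} {k : ℕ} {z : ℤ} (hk : k ≠ 0)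
    (h : q * k = z) : q.den ∣ k := by
  have hq : q = Rat.divInt z k := by
    rw [Rat.divInt_eq_div, ← h, Int.cast_natCast,
      mul_div_cancel_right₀ _ (Nat.cast_ne_zero.2 hk)]
  exact_mod_cast hq ▸ Rat.den_dvd z k

theorem Ideal.span_image_eq_span_of_associated {α : Type*} [CommSemiring α] {s : Set α}
    {g : α → α} (h : ∀ x ∈ s, Associated (g x) x) : Ideal.span (g '' s) = Ideal.span s :=
  le_antisymm
    (Ideal.span_le.2 <| by
      rintro _ ⟨x, hx, rfl⟩
      exact (Ideal.mem_iff_of_associated (h x hx)).2 (Ideal.subset_span hx))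
    (Ideal.span_le.2 fun x hx =>
      (Ideal.mem_iff_of_associated (h x hx)).1 (Ideal.subset_span ⟨x, hx, rfl⟩))

attribute [local instance] MvPolynomial.algebraMvPolynomial in
theorem MvPolynomial.exists_C_mul_mem_of_map_intCast_mem {σ : Type*}
    {J : Ideal (MvPolynomial σ ℤ)} {f : MvPolynomial σ ℤ}
    (h : map (Int.castRingHom ℚ) f ∈ J.map (map (Int.castRingHom ℚ))) :
    ∃ M : ℤ, M ≠ 0 ∧ C M * f ∈ J := by
  obtain ⟨⟨⟨g, hg⟩, ⟨_, M, hM, rfl⟩⟩, hfg⟩ :=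
    (IsLocalization.mem_map_algebraMap_iff ((nonZeroDivisors ℤ).map (C (σ := σ)))
      (MvPolynomial σ ℚ)).1 h
  refine ⟨M, nonZeroDivisors.ne_zero hM, ?_⟩
  convert hg using 1
  apply map_injective (Int.castRingHom ℚ) Int.cast_injective
  simpa [mul_comm] using hfg

namespace MonomialOrder

variable {σ : Type*} {m : MonomialOrder σ} {R S : Type*} [CommSemiring R] [CommSemiring S]

theorem degree_map_of_injective {φ : R →+* S} (hφ : Function.Injective φ)
    (f : MvPolynomial σ R) : m.degree (map φ f) = m.degree f := by
  rw [degree, degree, support_map_of_injective f hφ]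

theorem degree_map_of_leadingCoeff_ne_zero {φ : R →+* S} {f : MvPolynomial σ R}
    (h : φ (m.leadingCoeff f) ≠ 0) : m.degree (map φ f) = m.degree f := by
  refine m.toSyn.injective (le_antisymm
    (m.degree_le_iff.2 fun c hc => m.le_degree (support_map_subset φ f hc)) (m.le_degree ?_))
  rwa [mem_support_iff, coeff_map]

end MonomialOrder

namespace GB

variable {n : ℕ} {m : MonomialOrder (Fin n)}

theorem LM_eq_leadingTerm {R : Type*} [CommSemiring R] (f : MvPolynomial (Fin n) R) :
    LM m f = m.leadingTerm f := rfl

theorem IsReducedGB.not_degree_le {K : Type*} [Field K] {G : Finset (MvPolynomial (Fin n) K)}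
    {I : Ideal (MvPolynomial (Fin n) K)} (hG : IsReducedGB m G I) {g : MvPolynomial (Fin n) K}
    (hg : g ∈ G) {d : Fin n →₀ ℕ} (hd : d ∈ g.support) (hdg : d ≠ m.degree g)
    {f : MvPolynomial (Fin n) K} (hf : f ∈ I) (hf0 : f ≠ 0) : ¬ m.degree f ≤ d := by
  intro hfd
  obtain ⟨g', hg', hg'f⟩ := hG.1.2.2.2 f hf hf0
  by_cases hgg' : g' = g
  · subst hgg'
    exact hdg (m.toSyn.injective
      (le_antisymm (m.le_degree hd) (m.toSyn_monotone (hg'f.trans hfd))))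
  · exact hG.2.2 g hg d hd g' hg' hgg' (hg'f.trans hfd)

theorem IsStrongGB.exists_degree_le_degree_map {Gt : Finset (MvPolynomial (Fin n) ℤ)}
    {J : Ideal (MvPolynomial (Fin n) ℤ)} (hGt : IsStrongGB m Gt J) {p : ℕ} [Fact p.Prime]
    (hlucky : ∀ g ∈ Gt, ¬ (p : ℤ) ∣ m.leadingCoeff g) {M : ℤ} (hM : M ≠ 0)
    {f : MvPolynomial (Fin n) ℤ} (hMf : C M * f ∈ J)
    (hfp : map (Int.castRingHom (ZMod p)) f ≠ 0) :
    ∃ t ∈ Gt, m.degree t ≤ m.degree (map (Int.castRingHom (ZMod p)) f) := by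
  induction hd : m.toSyn (m.degree f) using WellFoundedLT.induction generalizing f with
  | _ d ih =>
  have hf0 : f ≠ 0 := by rintro rfl; simp at hfp
  have hMf0 : C M * f ≠ 0 := mul_ne_zero (C_ne_zero.2 hM) hf0
  obtain ⟨t, ht, htf⟩ := hGt.2.2 _ hMf hMf0
  have htJ : t ∈ J := hGt.2.1 ▸ Ideal.subset_span ht
  have htf : m.degree t ≤ m.degree f := by
    rw [LM_eq_leadingTerm, LM_eq_leadingTerm, MonomialOrder.leadingTerm,
      MonomialOrder.leadingTerm, monomial_dvd_monomial,
      m.degree_mul (C_ne_zero.2 hM) hf0, m.degree_C, zero_add] at htf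
    exact htf.1.resolve_left (m.leadingCoeff_ne_zero_iff.2 hMf0)
  by_cases hpf : (p : ℤ) ∣ m.leadingCoeff f
  swap
  · refine ⟨t, ht, ?_⟩
    rwa [m.degree_map_of_leadingCoeff_ne_zero]
    rwa [eq_intCast, Ne, ZMod.intCast_zmod_eq_zero_iff_dvd]
  -- Since `p ∣ lc f`, the S-polynomial of `f` and `t` reduces mod `p` to the unit `lc t` times
  -- `f mod p`, but has smaller degree than `f`.
  have hlt : Int.castRingHom (ZMod p) (m.leadingCoeff t) ≠ 0 := by
    rw [eq_intCast, Ne, ZMod.intCast_zmod_eq_zero_iff_dvd]; exact hlucky t ht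
  set s := m.sPolynomial f t with hs
  have hsJ : C M * s ∈ J := by
    have : C M * s = monomial (m.degree t - m.degree f) (m.leadingCoeff t) * (C M * f) -
        (C M * monomial (m.degree f - m.degree t) (m.leadingCoeff f)) * t := by
      rw [hs, MonomialOrder.sPolynomial]; ring
    rw [this]
    exact sub_mem (Ideal.mul_mem_left _ _ hMf) (Ideal.mul_mem_left _ _ htJ)
  have hsp : map (Int.castRingHom (ZMod p)) s =
      C (Int.castRingHom (ZMod p) (m.leadingCoeff t)) * map (Int.castRingHom (ZMod p)) f := by
    rw [hs, MonomialOrder.sPolynomial, tsub_eq_zero_of_le htf, map_sub, map_mul, map_mul,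
      map_monomial, map_monomial, eq_intCast (Int.castRingHom (ZMod p)) (m.leadingCoeff f),
      (ZMod.intCast_zmod_eq_zero_iff_dvd _ _).2 hpf, monomial_zero, zero_mul, sub_zero, C_apply]
  have hsp0 : map (Int.castRingHom (ZMod p)) s ≠ 0 := by
    rw [hsp]; exact mul_ne_zero (C_ne_zero.2 hlt) hfp
  have hs0 : s ≠ 0 := by rintro h; simp [h] at hsp0
  have hdeg : m.degree (map (Int.castRingHom (ZMod p)) s) =
      m.degree (map (Int.castRingHom (ZMod p)) f) := by
    rw [hsp, m.degree_mul (C_ne_zero.2 hlt) hfp, m.degree_C, zero_add]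
  have hslt : m.toSyn (m.degree s) < d := by
    simpa [hd, sup_eq_left.2 htf] using m.degree_sPolynomial_lt_sup_degree hs0
  obtain ⟨t', ht', ht's⟩ := ih _ hslt hsJ hsp0 rfl
  exact ⟨t', ht', hdeg ▸ ht's⟩

theorem den_ne_zero (f : MvPolynomial (Fin n) ℚ) : den f ≠ 0 := by
  simp [den, Finset.lcm_eq_zero_iff]

theorem map_intScale (f : MvPolynomial (Fin n) ℚ) :
    map (Int.castRingHom ℚ) (intScale f) = C (den f : ℚ) * f := by
  ext e
  rw [coeff_map, coeff_C_mul, intScale, coeff_sum]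
  simp_rw [coeff_monomial]
  rw [Finset.sum_ite_eq']
  split_ifs with he
  · rw [eq_intCast, Rat.intCast_num_mul_natCast (k := den f) (Finset.dvd_lcm he), mul_comm]
  · rw [notMem_support_iff.1 he, map_zero, mul_zero]

theorem coeff_intScale (f : MvPolynomial (Fin n) ℚ) (e : Fin n →₀ ℕ) :
    ((coeff e (intScale f) : ℤ) : ℚ) = den f * coeff e f := by
  have := congrArg (coeff e) (map_intScale f)
  rwa [coeff_map, coeff_C_mul, eq_intCast] at this

theorem support_intScale (f : MvPolynomial (Fin n) ℚ) : (intScale f).support = f.support := by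
  ext e
  rw [mem_support_iff, mem_support_iff, ← Int.cast_ne_zero (α := ℚ), coeff_intScale]
  exact mul_ne_zero_iff.trans (and_iff_right (by exact_mod_cast den_ne_zero f))

theorem coeff_degree_map_intScale {p : ℕ} {f : MvPolynomial (Fin n) ℚ}
    (hf : m.leadingCoeff f = 1) (hpf : p ∣ den f) :
    coeff (m.degree f) (map (Int.castRingHom (ZMod p)) (intScale f)) = 0 := by
  have : coeff (m.degree f) (intScale f) = den f := by
    have := coeff_intScale f (m.degree f)
    rw [← MonomialOrder.leadingCoeff, hf, mul_one] at this
    exact_mod_cast this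
  rw [coeff_map, this, eq_intCast, Int.cast_natCast, ZMod.natCast_eq_zero_iff]
  exact hpf

theorem den_dvd_of_C_mul_eq_map {f : MvPolynomial (Fin n) ℚ} {k : ℕ} (hk : k ≠ 0)
    {g : MvPolynomial (Fin n) ℤ} (h : C (k : ℚ) * f = map (Int.castRingHom ℚ) g) :
    den f ∣ k :=
  Finset.lcm_dvd fun d _ => Rat.den_dvd_of_mul_natCast_eq_intCast hk <| by
    have := congrArg (coeff d) h
    rwa [coeff_C_mul, coeff_map, eq_intCast, mul_comm] at this

theorem map_intScale_ne_zero_of_dvd_den {p : ℕ} (hp : p.Prime) {f : MvPolynomial (Fin n) ℚ}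
    (hpf : p ∣ den f) : map (Int.castRingHom (ZMod p)) (intScale f) ≠ 0 := by
  -- Otherwise `(den f / p) • f` would already have integer coefficients.
  intro h0
  obtain ⟨g, hg⟩ := (C_dvd_iff_map_hom_eq_zero _ (p : ℤ)
    (fun r => by rw [eq_intCast, ZMod.intCast_zmod_eq_zero_iff_dvd]) _).2 h0
  obtain ⟨c, hc⟩ := hpf
  have hc0 : c ≠ 0 := by rintro rfl; exact den_ne_zero f (by simpa using hc)
  have hcf : C (c : ℚ) * f = map (Int.castRingHom ℚ) g := by
    apply mul_left_cancel₀ (C_ne_zero.2 (Nat.cast_ne_zero.2 hp.ne_zero) :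
      (C (p : ℚ) : MvPolynomial (Fin n) ℚ) ≠ 0)
    have := congrArg (map (Int.castRingHom ℚ)) hg
    rw [map_intScale, hc, map_mul, map_C] at this
    rw [← mul_assoc, ← C_mul, ← Nat.cast_mul, this, eq_intCast, Int.cast_natCast]
  have hle := Nat.le_of_dvd (Nat.pos_of_ne_zero hc0) (den_dvd_of_C_mul_eq_map hc0 hcf)
  rw [hc] at hle
  nlinarith [hp.two_le, Nat.pos_of_ne_zero hc0]

theorem C_content_mul_primQ (f : MvPolynomial (Fin n) ℚ) :
    C ((intScale f).support.gcd fun e => coeff e (intScale f)) * primQ f = intScale f := by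
  ext e
  rw [coeff_C_mul, primQ, coeff_sum]
  simp_rw [coeff_monomial]
  rw [Finset.sum_ite_eq']
  split_ifs with he
  · exact Int.mul_ediv_cancel' (Finset.gcd_dvd he)
  · rw [mul_zero, notMem_support_iff.1 he]

theorem associated_map_primQ (f : MvPolynomial (Fin n) ℚ) :
    Associated (map (Int.castRingHom ℚ) (primQ f)) f := by
  rcases eq_or_ne f 0 with rfl | hf
  · simp [primQ, intScale]
  set c := (intScale f).support.gcd fun e => coeff e (intScale f)
  have hden : (den f : ℚ) ≠ 0 := by exact_mod_cast den_ne_zero f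
  have key : C (c : ℚ) * map (Int.castRingHom ℚ) (primQ f) = C (den f : ℚ) * f := by
    rw [← map_intScale, ← C_content_mul_primQ, map_mul, map_C, eq_intCast]
  have hc : (c : ℚ) ≠ 0 := by
    intro hc
    rw [hc, C_0, zero_mul, eq_comm] at key
    exact mul_ne_zero (C_ne_zero.2 hden) hf key
  have : map (Int.castRingHom ℚ) (primQ f) = C ((c : ℚ)⁻¹ * den f) * f := by
    rw [C_mul, mul_assoc, ← key, ← mul_assoc, ← C_mul, inv_mul_cancel₀ hc, C_1, one_mul]
  rw [this]
  exact associated_unit_mul_left f _ ((mul_ne_zero (inv_ne_zero hc) hden).isUnit.map C)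

theorem map_span_primQ (F : Set (MvPolynomial (Fin n) ℚ)) :
    (Ideal.span (primQ '' F)).map (map (Int.castRingHom ℚ)) = Ideal.span F := by
  rw [Ideal.map_span, ← Set.image_comp]
  exact Ideal.span_image_eq_span_of_associated fun f _ => associated_map_primQ f

end GB

theorem stmt14_general {n : ℕ} (m : MonomialOrder (Fin n))
    (F : Finset (MvPolynomial (Fin n) ℚ))
    (G : Finset (MvPolynomial (Fin n) ℚ))
    (hG : GB.IsReducedGB m G (Ideal.span (F : Set (MvPolynomial (Fin n) ℚ))))
    (Gt : Finset (MvPolynomial (Fin n) ℤ))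
    (hGt : GB.IsMinStrongGB m Gt
      (Ideal.span (GB.primQ '' (F : Set (MvPolynomial (Fin n) ℚ)))))
    (p : ℕ) (hp : p.Prime)
    (hlucky : ∀ g ∈ Gt, ¬ (p : ℤ) ∣ GB.lcoeff m g) :
    ¬ p ∣ GB.denF G := by
  have : Fact p.Prime := ⟨hp⟩
  intro hpG
  obtain ⟨g, hgG, hpg⟩ :=
    hp.prime.exists_mem_finset_dvd (hpG.trans (Finset.lcm_dvd_prod G GB.den))
  obtain ⟨M, hM, hMg⟩ :
      ∃ M : ℤ, M ≠ 0 ∧ C M * GB.intScale g ∈ Ideal.span (GB.primQ '' (F : Set _)) := by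
    apply MvPolynomial.exists_C_mul_mem_of_map_intCast_mem
    rw [GB.map_span_primQ, GB.map_intScale]
    exact Ideal.mul_mem_left _ _ (hG.1.2.1 hgG)
  have hgp := GB.map_intScale_ne_zero_of_dvd_den hp hpg
  obtain ⟨t, htGt, htg⟩ := hGt.1.exists_degree_le_degree_map hlucky hM hMg hgp
  have hd : m.degree (map (Int.castRingHom (ZMod p)) (GB.intScale g)) ∈ g.support :=
    GB.support_intScale g ▸ support_map_subset _ _ (m.degree_mem_support hgp)
  have hdg : m.degree (map (Int.castRingHom (ZMod p)) (GB.intScale g)) ≠ m.degree g := fun h =>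
    m.coeff_degree_ne_zero_iff.2 hgp (h ▸ GB.coeff_degree_map_intScale (hG.2.1 g hgG) hpg)
  refine hG.not_degree_le hgG hd hdg (f := map (Int.castRingHom ℚ) t) ?_ ?_ ?_
  · rw [← GB.map_span_primQ]
    exact Ideal.mem_map_of_mem _ (hGt.1.2.1 ▸ Ideal.subset_span htGt)
  · rw [Ne, map_eq_zero_iff _ (map_injective (Int.castRingHom ℚ) Int.cast_injective)]
    exact fun ht => hGt.1.1 (ht ▸ htGt)
  · rwa [m.degree_map_of_injective Int.cast_injective]

/-- if `p` is σ-Pauer-lucky for `prim(F)` then `p` is σ-good for `⟨F⟩`. -/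
theorem stmt14 {n : ℕ} (m : MonomialOrder (Fin n))
    (F : Finset (MvPolynomial (Fin n) ℚ)) (hF0 : (0 : MvPolynomial (Fin n) ℚ) ∉ F)
    (G : Finset (MvPolynomial (Fin n) ℚ))
    (hG : GB.IsReducedGB m G (Ideal.span (F : Set (MvPolynomial (Fin n) ℚ))))
    (Gt : Finset (MvPolynomial (Fin n) ℤ))
    (hGt : GB.IsMinStrongGB m Gt
      (Ideal.span (GB.primQ '' (F : Set (MvPolynomial (Fin n) ℚ)))))
    (p : ℕ) (hp : p.Prime)
    (hlucky : ∀ g ∈ Gt, ¬ (p : ℤ) ∣ GB.lcoeff m g) :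
    ¬ p ∣ GB.denF G :=
  stmt14_general m F G hG Gt hGt p hp hlucky
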